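/- If G = G(m,p,k) is a metacyclic group with trivial centre whose quotient parameter p (= ind_m(k)) is prime, then every nonzero element of the multiplicative closure R* of R = {k^j − 1 mod m : j ∈ ℤ_p} in ℤ_m is a unit of ℤ_m. -/

import Mathlib

/-! Since `k ^ p = 1` in `ℤ_m` and `p` is prime, for `0 < j < p` some power `(k ^ j) ^ a` equals `k`,
so `k ^ j - 1` divides the unit `k - 1` and is itself a unit. Hence every element of `R` is `0` or a
unit, and this dichotomy is preserved under products. -/

/-- `n = ind_m(k)`: `n` is the least positive integer with `k^n ≡ 1 (mod m)`. -/
def IsIndex (m k n : ℕ) : Prop :=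
  0 < n ∧ k ^ n ≡ 1 [MOD m] ∧ ∀ d : ℕ, 0 < d → k ^ d ≡ 1 [MOD m] → n ≤ d

/-- The multiplicative closure `S*` of `S` in `ℤ_m`. -/
def mulClosure (m : ℕ) (S : Set (ZMod m)) : Set (ZMod m) :=
  Subsemigroup.closure S

/-- The set `R = {k^j − 1 mod m : j ∈ ℤ_p}`. -/
def Rset (m p k : ℕ) : Set (ZMod m) :=
  {x | ∃ j : ZMod p, x = (k : ZMod m) ^ j.val - 1}

theorem isUnit_pow_sub_one_of_coprime {R : Type*} [CommRing R] {u : R} {n j : ℕ}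
    (hn : 1 < n) (hu : u ^ n = 1) (hu1 : IsUnit (u - 1)) (hj : j.Coprime n) :
    IsUnit (u ^ j - 1) := by
  obtain ⟨a, ha⟩ := Nat.exists_mul_mod_eq_one_of_coprime hj hn
  have hpow : (u ^ j) ^ a = u := by
    rw [← pow_mul, pow_eq_pow_mod _ hu, ha.2, pow_one]
  refine isUnit_of_dvd_unit ?_ hu1
  simpa only [hpow, one_pow] using sub_dvd_pow_sub_pow (u ^ j) 1 a

theorem eq_zero_or_isUnit_of_mem_closure {M₀ : Type*} [MonoidWithZero M₀] {S : Set M₀}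
    (hS : ∀ x ∈ S, x = 0 ∨ IsUnit x) {x : M₀} (hx : x ∈ Subsemigroup.closure S) :
    x = 0 ∨ IsUnit x := by
  induction hx using Subsemigroup.closure_induction with
  | mem y hy => exact hS y hy
  | mul a b _ _ ha hb =>
    rcases ha with rfl | ha
    · exact .inl (zero_mul b)
    rcases hb with rfl | hb
    · exact .inl (mul_zero a)
    · exact .inr (ha.mul hb)

theorem ZMod.isUnit_natCast_sub_one {m k : ℕ} (hk : 0 < k) (hcop : Nat.gcd m (k - 1) = 1) :
    IsUnit ((k : ZMod m) - 1) := by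
  have hcast : ((k - 1 : ℕ) : ZMod m) = (k : ZMod m) - 1 := by
    rw [Nat.cast_sub hk, Nat.cast_one]
  rw [← hcast, ZMod.isUnit_iff_coprime]
  exact Nat.coprime_comm.mp hcop

theorem eq_zero_or_isUnit_of_mem_Rset {m p k : ℕ} (hk : 0 < k) (hcop : Nat.gcd m (k - 1) = 1)
    (hkp : k ^ p ≡ 1 [MOD m]) (hp : p.Prime) {x : ZMod m} (hx : x ∈ Rset m p k) :
    x = 0 ∨ IsUnit x := by
  have : NeZero p := ⟨hp.ne_zero⟩
  obtain ⟨j, rfl⟩ := hx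
  rcases Nat.eq_zero_or_pos j.val with hj | hj
  · exact .inl (by rw [hj, pow_zero, sub_self])
  refine .inr (isUnit_pow_sub_one_of_coprime hp.one_lt ?_ (ZMod.isUnit_natCast_sub_one hk hcop) ?_)
  · exact_mod_cast (ZMod.natCast_eq_natCast_iff _ _ _).mpr hkp
  · exact Nat.coprime_comm.mp <| (hp.coprime_iff_not_dvd).mpr <|
      Nat.not_dvd_of_pos_of_lt hj (ZMod.val_lt j)

theorem stmt_19_general (m p k : ℕ) (hk : 0 < k)
    (hcop : Nat.gcd m (k - 1) = 1) (hind : IsIndex m k p)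
    (hp : p.Prime) :
    ∀ x ∈ mulClosure m (Rset m p k), x ≠ 0 → IsUnit x := by
  intro x hx hx0
  refine (eq_zero_or_isUnit_of_mem_closure (fun y hy => ?_) hx).resolve_left hx0
  exact eq_zero_or_isUnit_of_mem_Rset hk hcop hind.2.1 hp hy

/-- if `G = G(m,p,k)` has trivial centre and the quotient
parameter `p = ind_m(k)` is prime, then every nonzero element of the
multiplicative closure `R*` of `R = {k^j − 1 : j ∈ ℤ_p}` in `ℤ_m` is a unit
of `ℤ_m`. -/
theorem stmt_19 (m p k : ℕ) (hm : 0 < m) (hk : 0 < k)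
    (hcop : Nat.gcd m (k - 1) = 1) (hind : IsIndex m k p)
    (hp : p.Prime) :
    ∀ x ∈ mulClosure m (Rset m p k), x ≠ 0 → IsUnit x :=
  stmt_19_general m p k hk hcop hind hp
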